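/- Let α ≥ 1. If a class C of distributions on a countable domain X is not obliviously subtractively α-robustly learnable, then C is also not adaptively subtractively α-robustly learnable with respect to ground-truth-aware subtractive adaptive adversaries. -/

import Mathlib

open scoped ENNReal NNReal

/-- Total variation distance between two discrete distributions. -/
noncomputable def tv {X : Type*} (p q : PMF X) : ℝ :=
  (∑' x, |(p x).toReal - (q x).toReal|) / 2

/-- The distribution of an i.i.d. sample of size `m` from `p`, viewed as a multiset. -/
noncomputable def iid {X : Type*} (p : PMF X) : ℕ → PMF (Multiset X)
  | 0 => PMF.pure 0
  | n + 1 => (iid p n).bind fun s => p.map fun x => x ::ₘ s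

/-- `|Q|^m` : first draw `q ∼ Q`, then an i.i.d. sample `S ∼ q^m`. -/
noncomputable def metaSample {X : Type*} (Q : PMF (PMF X)) (m : ℕ) : PMF (Multiset X) :=
  Q.bind fun q => iid q m

/-- An adaptive adversary: a randomized map from samples (finite multisets) to samples. -/
abbrev Adversary (X : Type*) := Multiset X → PMF (Multiset X)

/-- `V(P)`: the distribution of `V S` for `S ∼ P` (including internal randomness). -/
noncomputable def advPush {X : Type*} (V : Adversary X) (P : PMF (Multiset X)) :
    PMF (Multiset X) := P.bind V

/-- An additive adversary only adds points: `S ⊆ V(S)` almost surely. -/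
def IsAdditive {X : Type*} (V : Adversary X) : Prop :=
  ∀ S T, T ∈ (V S).support → S ≤ T

/-- A subtractive adversary only removes points: `V(S) ⊆ S` almost surely. -/
def IsSubtractive {X : Type*} (V : Adversary X) : Prop :=
  ∀ S T, T ∈ (V S).support → T ≤ S

/-- Fixed constant budget `η`: `|V(S)|` depends only on `|S|` (via `c`), and for every `m`,
`η m − 1 < m·budget(V,m) ≤ η m` where `m·budget(V,m) = ||V(S)| − |S||`. -/
def FixedBudget {X : Type*} (V : Adversary X) (η : ℝ) : Prop :=
  ∃ c : ℕ → ℕ, (∀ S T, T ∈ (V S).support → Multiset.card T = c (Multiset.card S)) ∧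
    ∀ m : ℕ, η * m - 1 < |(c m : ℝ) - m| ∧ |(c m : ℝ) - m| ≤ η * m

/-- Fixed constant budget `η` for an additive adversary (`m·budget(V,m) = |V(S)| − |S|`). -/
def FixedBudgetAdd {X : Type*} (V : Adversary X) (η : ℝ) : Prop :=
  ∃ c : ℕ → ℕ, (∀ S T, T ∈ (V S).support → Multiset.card T = c (Multiset.card S)) ∧
    ∀ m : ℕ, η * m - 1 < (c m : ℝ) - m ∧ (c m : ℝ) - m ≤ η * m

/-- Fixed constant budget `η` for a subtractive adversary (`m·budget(V,m) = |S| − |V(S)|`). -/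
def FixedBudgetSub {X : Type*} (V : Adversary X) (η : ℝ) : Prop :=
  ∃ c : ℕ → ℕ, (∀ S T, T ∈ (V S).support → Multiset.card T = c (Multiset.card S)) ∧
    ∀ m : ℕ, η * m - 1 < (m : ℝ) - c m ∧ (m : ℝ) - c m ≤ η * m

/-- Probability of an event under a discrete distribution. -/
noncomputable def probEvent {β : Type*} (P : PMF β) (E : Set β) : ℝ≥0∞ :=
  P.toOuterMeasure E

/-- `A` with sample complexity `mc` learns the class `C` against adversary `V`,
up to error `bound + ε` with confidence `1 − δ` once `m ≥ mc ε δ`. -/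
def RobustLearnerFor {X : Type*} (C : Set (PMF X)) (A : Multiset X → PMF X)
    (mc : ℝ → ℝ → ℕ) (V : Adversary X) (bound : ℝ) : Prop :=
  ∀ p ∈ C, ∀ ε δ : ℝ, 0 < ε → ε < 1 → 0 < δ → δ < 1 →
    ∀ m : ℕ, mc ε δ ≤ m →
      1 - ENNReal.ofReal δ ≤
        probEvent ((iid p m).bind V) {T | tv (A T) p ≤ bound + ε}

/-- `C` is adaptively α-robustly learnable w.r.t. the single adversary `V` with budget `η`. -/
def RobustlyLearnableWrt {X : Type*} (C : Set (PMF X)) (α : ℝ)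
    (V : Adversary X) (η : ℝ) : Prop :=
  ∃ A mc, RobustLearnerFor C A mc V (α * η)

/-- `V` (with budget `η`) is a universal α-adversary for `C`. -/
def UniversalAdversary {X : Type*} (C : Set (PMF X)) (α : ℝ)
    (V : Adversary X) (η : ℝ) : Prop :=
  ¬ RobustlyLearnableWrt C α V η

/-- `C` is adaptively α-robustly learnable w.r.t. a class `𝒱` of adversaries
(each given with its budget). -/
def RobustlyLearnableWrtClass {X : Type*} (C : Set (PMF X)) (α : ℝ)
    (𝒱 : Set (Adversary X × ℝ)) : Prop :=
  ∃ A mc, ∀ Vη ∈ 𝒱, RobustLearnerFor C A mc Vη.1 (α * Vη.2)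

/-- `C` is adaptively additively α-robustly learnable: one learner works simultaneously
against all additive adaptive adversaries with fixed constant budgets. -/
def AdditivelyRobustlyLearnable {X : Type*} (C : Set (PMF X)) (α : ℝ) : Prop :=
  ∃ A mc, ∀ V : Adversary X, ∀ η : ℝ, 0 < η → η < 1 →
    IsAdditive V → FixedBudgetAdd V η → RobustLearnerFor C A mc V (α * η)

/-- `C` is adaptively subtractively α-robustly learnable. -/
def SubtractivelyRobustlyLearnable {X : Type*} (C : Set (PMF X)) (α : ℝ) : Prop :=
  ∃ A mc, ∀ V : Adversary X, ∀ η : ℝ, 0 < η → η < 1 →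
    IsSubtractive V → FixedBudgetSub V η → RobustLearnerFor C A mc V (α * η)

/-- The pair `(V1, V2)` successfully `(γ,ζ)`-confuses `C`-generated samples of size `m`. -/
def ConfusesPair {X : Type*} (C : Set (PMF X)) (V1 V2 : Adversary X)
    (γ ζ : ℝ) (m : ℕ) : Prop :=
  ∃ p ∈ C, ∃ Q : PMF (PMF X), Q.support ⊆ C ∧
    (∀ q ∈ Q.support, γ < tv p q) ∧
    tv (advPush V1 (metaSample Q m)) (advPush V2 (iid p m)) < ζ

/-- A single adversary `V` successfully `(γ,ζ)`-confuses `C`-generated samples of size `m`. -/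
def Confuses {X : Type*} (C : Set (PMF X)) (V : Adversary X) (γ ζ : ℝ) (m : ℕ) : Prop :=
  ConfusesPair C V V γ ζ m

/-- `p` is the distribution `p_{i,j,k} = (1 − 1/j)·δ_{(0,0)} + (1/j − 1/k)·U_{B_i×{2j+1}}
 + (1/k)·δ_{(i,2j+2)}` on `ℕ × ℕ`. -/
def IsPijk (B : ℕ → Finset ℕ) (i j k : ℕ) (p : PMF (ℕ × ℕ)) : Prop :=
  ∀ x : ℕ × ℕ,
    p x = (1 - ((j : ℝ≥0∞))⁻¹) * (if x = (0, 0) then 1 else 0)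
      + (((j : ℝ≥0∞))⁻¹ - ((k : ℝ≥0∞))⁻¹) *
          (if x.1 ∈ B i ∧ x.2 = 2 * j + 1 then (((B i).card : ℝ≥0∞))⁻¹ else 0)
      + ((k : ℝ≥0∞))⁻¹ * (if x = (i, 2 * j + 2) then 1 else 0)

/-- The class `C_g = {p_{i,j,g(j)} : i, j ∈ ℕ}` (for the meaningful parameters). -/
def Cg (B : ℕ → Finset ℕ) (g : ℕ → ℕ) : Set (PMF (ℕ × ℕ)) :=
  {p | ∃ i j : ℕ, 1 ≤ j ∧ j < g j ∧ (B i).Nonempty ∧ IsPijk B i j (g j) p}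

/-- `g` is superlinear: `g(n)/n → ∞`. -/
def Superlinear (g : ℕ → ℕ) : Prop :=
  Filter.Tendsto (fun n => (g n : ℝ) / n) Filter.atTop Filter.atTop

/-- `C` is obliviously subtractively α-robustly learnable: a learner succeeds given i.i.d.
samples from any `p'` with `p = (1−η)p' + ηr` for some `r`, for any `p ∈ C`. -/
def ObliviouslySubtractivelyRobustlyLearnable {X : Type*} (C : Set (PMF X)) (α : ℝ) : Prop :=
  ∃ (A : Multiset X → PMF X) (mc : ℝ → ℝ → ℕ),
    ∀ p ∈ C, ∀ η : ℝ, 0 ≤ η → η < 1 → ∀ p' r : PMF X,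
      (∀ x, p x = ENNReal.ofReal (1 - η) * p' x + ENNReal.ofReal η * r x) →
      ∀ ε δ : ℝ, 0 < ε → ε < 1 → 0 < δ → δ < 1 → ∀ m : ℕ, mc ε δ ≤ m →
        1 - ENNReal.ofReal δ ≤ probEvent (iid p' m) {S | tv (A S) p ≤ α * η + ε}

/-- A ground-truth-aware adaptive adversary is subtractive if `V(S,q) ⊆ S` almost surely. -/
def GTSubtractive {X : Type*} (V : Multiset X → PMF X → PMF (Multiset X)) : Prop :=
  ∀ S q T, T ∈ (V S q).support → T ≤ S

/-- Fixed constant budget `η` for a ground-truth-aware subtractive adaptive adversary. -/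
def GTFixedBudgetSub {X : Type*} (V : Multiset X → PMF X → PMF (Multiset X)) (η : ℝ) : Prop :=
  ∃ c : ℕ → ℕ, (∀ S q T, T ∈ (V S q).support → Multiset.card T = c (Multiset.card S)) ∧
    ∀ m : ℕ, η * m - 1 < (m : ℝ) - c m ∧ (m : ℝ) - c m ≤ η * m

/-- `C` is adaptively subtractively α-robustly learnable with respect to ground-truth-aware
subtractive adaptive adversaries with fixed constant budgets. -/
def GTAwareSubtractivelyRobustlyLearnable {X : Type*} (C : Set (PMF X)) (α : ℝ) : Prop :=
  ∃ (A : Multiset X → PMF X) (mc : ℝ → ℝ → ℕ),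
    ∀ V : Multiset X → PMF X → PMF (Multiset X), GTSubtractive V →
      ∀ η : ℝ, 0 < η → η < 1 → GTFixedBudgetSub V η →
        ∀ p ∈ C, ∀ ε δ : ℝ, 0 < ε → ε < 1 → 0 < δ → δ < 1 → ∀ m : ℕ, mc ε δ ≤ m →
          1 - ENNReal.ofReal δ ≤
            probEvent ((iid p m).bind fun S => V S p) {T | tv (A T) p ≤ α * η + ε}


/-!
Write `p = (1 - η) p' + η r`. An adversary that knows `p` can keep each point `x` of a `p`-sample
of size `m'` independently with probability `(1 - η) p'(x) / p(x)`: the kept points form an i.i.d.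
`p'`-sample whose size is Binomial `(m', 1 - η)`. Give it the slightly larger budget
`η' = η + ε / (2α)`, so that it has to return `m = m' - ⌊η' m'⌋` points. By Chebyshev the thinned
sample has at least `m` points with high probability, and erasing uniformly random points from an
i.i.d. sample leaves an i.i.d. sample. So, up to probability `δ / 2`, a learner for
ground-truth-aware adversaries sees the same input under `p'^m` as against this adversary, where
its error is at most `α η' + ε / 2 = α η + ε`: it is itself an oblivious learner.
-/
noncomputable section

namespace PMF

variable {α β : Type*}

def bernoulliENNReal (q : ℝ≥0∞) (hq : q ≤ 1) : PMF Bool :=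
  ofFintype (fun b => cond b q (1 - q)) (by simp [add_tsub_cancel_of_le hq])

@[simp]
theorem bernoulliENNReal_apply {q : ℝ≥0∞} (hq : q ≤ 1) (b : Bool) :
    bernoulliENNReal q hq b = cond b q (1 - q) := rfl

theorem bernoulliENNReal_bind_apply {q : ℝ≥0∞} (hq : q ≤ 1) (f : Bool → PMF α) (a : α) :
    (bernoulliENNReal q hq).bind f a = q * f true a + (1 - q) * f false a := by
  simp [bind_apply]

theorem tsum_bind_mul (μ : PMF α) (f : α → PMF β) (g : β → ℝ≥0∞) :
    ∑' b, (μ.bind f) b * g b = ∑' a, μ a * ∑' b, f a b * g b := by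
  simp_rw [bind_apply, ← ENNReal.tsum_mul_right, ← ENNReal.tsum_mul_left, mul_assoc]
  exact ENNReal.tsum_comm

theorem tsum_mul_congr_support (μ : PMF α) {f g : α → ℝ≥0∞} (h : ∀ a ∈ μ.support, f a = g a) :
    ∑' a, μ a * f a = ∑' a, μ a * g a := by
  refine tsum_congr fun a => ?_
  by_cases ha : a ∈ μ.support
  · rw [h a ha]
  · rw [(apply_eq_zero_iff μ a).2 ha, zero_mul, zero_mul]

theorem bind_congr_support (μ : PMF α) {f g : α → PMF β} (h : ∀ a ∈ μ.support, f a = g a) :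
    μ.bind f = μ.bind g := by
  ext b
  simp only [bind_apply]
  exact tsum_mul_congr_support μ fun a ha => by rw [h a ha]

theorem map_congr_support (μ : PMF α) {f g : α → β} (h : ∀ a ∈ μ.support, f a = g a) :
    μ.map f = μ.map g :=
  bind_congr_support μ fun a ha => congrArg PMF.pure (h a ha)

end PMF

section probEvent

variable {α β : Type*}

theorem probEvent_eq_tsum (μ : PMF α) (E : Set α) :
    probEvent μ E = ∑' a, μ a * E.indicator 1 a := by
  rw [probEvent, PMF.toOuterMeasure_apply]
  exact tsum_congr fun a => by by_cases ha : a ∈ E <;> simp [ha]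

theorem probEvent_mono (μ : PMF α) {E F : Set α} (h : E ⊆ F) : probEvent μ E ≤ probEvent μ F :=
  MeasureTheory.measure_mono h

theorem probEvent_le_one (μ : PMF α) (E : Set α) : probEvent μ E ≤ 1 :=
  (probEvent_mono μ (Set.subset_univ E)).trans_eq <|
    (PMF.toOuterMeasure_apply_eq_one_iff μ _).2 (Set.subset_univ _)

theorem probEvent_bind (μ : PMF α) (f : α → PMF β) (E : Set β) :
    probEvent (μ.bind f) E = ∑' a, μ a * probEvent (f a) E :=
  PMF.toOuterMeasure_bind_apply μ f E

theorem probEvent_le_tsum (μ : PMF α) (E : Set α) {g : α → ℝ≥0∞} (hg : E.indicator 1 ≤ g) :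
    probEvent μ E ≤ ∑' a, μ a * g a := by
  rw [probEvent_eq_tsum]
  exact ENNReal.tsum_le_tsum fun a => mul_le_mul_right (hg a) _

theorem probEvent_eq_one_of_forall_mem (μ : PMF α) {E : Set α} (h : ∀ a, a ∈ E) :
    probEvent μ E = 1 :=
  (PMF.toOuterMeasure_apply_eq_one_iff μ E).2 fun a _ => h a

end probEvent

theorem tv_le_one {X : Type*} (p q : PMF X) : tv p q ≤ 1 := by
  have hp := ENNReal.summable_toReal p.tsum_coe_ne_top
  have hq := ENNReal.summable_toReal q.tsum_coe_ne_top
  have hbound : ∀ x, |(p x).toReal - (q x).toReal| ≤ (p x).toReal + (q x).toReal := fun x =>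
    abs_sub_le_iff.2 ⟨by linarith [(q x).toReal_nonneg], by linarith [(p x).toReal_nonneg]⟩
  have hsum := Summable.tsum_le_tsum hbound
    ((hp.add hq).of_nonneg_of_le (fun _ => abs_nonneg _) hbound) (hp.add hq)
  rw [hp.tsum_add hq, ← ENNReal.tsum_toReal_eq (fun x => p.apply_ne_top x),
    ← ENNReal.tsum_toReal_eq (fun x => q.apply_ne_top x), p.tsum_coe, q.tsum_coe] at hsum
  rw [tv]
  norm_num at hsum
  linarith

section RandomErasure

variable {X : Type*}

theorem card_eq_of_mem_support_iid (p : PMF X) {m : ℕ} {S : Multiset X}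
    (h : S ∈ (iid p m).support) : Multiset.card S = m := by
  induction m generalizing S with
  | zero => simp_all [iid]
  | succ n ih =>
    obtain ⟨s, hs, x, -, rfl⟩ := by simpa [iid] using h
    simp [ih hs]

theorem ENNReal.one_sub_inv_mul_div_natCast {c : ℕ} (hc : c ≠ 0) (y : ℝ≥0∞) :
    (1 - ((c : ℝ≥0∞) + 1)⁻¹) * (y / c) = y / (c + 1) := by
  have hc1 : ((c : ℝ≥0∞) + 1) ≠ 0 := by simp
  have h1 : 1 - ((c : ℝ≥0∞) + 1)⁻¹ = c / (c + 1) := by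
    refine ENNReal.sub_eq_of_eq_add (by simp) ?_
    rw [← one_div, ENNReal.div_add_div_same, ENNReal.div_self hc1 (by simp)]
  calc (1 - ((c : ℝ≥0∞) + 1)⁻¹) * (y / c) = y * ((c : ℝ≥0∞) + 1)⁻¹ * (c * (c : ℝ≥0∞)⁻¹) := by
        rw [h1, div_eq_mul_inv, div_eq_mul_inv]; ring
    _ = y / (c + 1) := by rw [ENNReal.mul_inv_cancel (by simpa) (by simp), mul_one, div_eq_mul_inv]

theorem PMF.ofMultiset_cons (x : X) {s : Multiset X} (hs : s ≠ 0) :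
    PMF.ofMultiset (x ::ₘ s) Multiset.cons_ne_zero =
      (PMF.bernoulliENNReal ((Multiset.card s : ℝ≥0∞) + 1)⁻¹
        (ENNReal.inv_le_one.2 le_add_self)).bind
        fun b => if b then PMF.pure x else PMF.ofMultiset s hs := by
  classical
  ext a
  rw [PMF.bernoulliENNReal_bind_apply, if_pos rfl, if_neg Bool.false_ne_true,
    PMF.ofMultiset_apply, PMF.ofMultiset_apply,
    ENNReal.one_sub_inv_mul_div_natCast (by simpa using hs), PMF.pure_apply,
    Multiset.count_cons, Multiset.card_cons]
  push_cast
  rw [ENNReal.add_div, add_comm, ENNReal.div_eq_inv_mul]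

variable [DecidableEq X]

def eraseRandom (s : Multiset X) : PMF (Multiset X) :=
  if h : s = 0 then PMF.pure 0 else (PMF.ofMultiset s h).map s.erase

def eraseRandomN : ℕ → Multiset X → PMF (Multiset X)
  | 0, s => PMF.pure s
  | j + 1, s => (eraseRandomN j s).bind eraseRandom

theorem le_and_card_of_mem_support_eraseRandom {s u : Multiset X}
    (h : u ∈ (eraseRandom s).support) :
    u ≤ s ∧ Multiset.card u = Multiset.card s - 1 := by
  unfold eraseRandom at h
  split_ifs at h with hs
  · simp_all
  · obtain ⟨y, hy, rfl⟩ := by simpa using h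
    exact ⟨Multiset.erase_le y s, Multiset.card_erase_of_mem (by simpa using hy)⟩

theorem le_and_card_of_mem_support_eraseRandomN {j : ℕ} {s u : Multiset X}
    (h : u ∈ (eraseRandomN j s).support) :
    u ≤ s ∧ Multiset.card u = Multiset.card s - j := by
  induction j generalizing u with
  | zero => simp_all [eraseRandomN]
  | succ j ih =>
    obtain ⟨v, hv, hu⟩ := by simpa [eraseRandomN] using h
    obtain ⟨hvs, hv⟩ := ih hv
    obtain ⟨huv, hu⟩ := le_and_card_of_mem_support_eraseRandom hu
    exact ⟨huv.trans hvs, by omega⟩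

theorem eraseRandom_singleton (x : X) : eraseRandom {x} = PMF.pure 0 := by
  rw [eraseRandom, dif_neg (Multiset.singleton_ne_zero x),
    PMF.map_congr_support _ (g := Function.const X 0), PMF.map_const]
  intro y hy
  simp_all

theorem eraseRandom_cons (x : X) {s : Multiset X} (hs : s ≠ 0) :
    eraseRandom (x ::ₘ s) =
      (PMF.bernoulliENNReal ((Multiset.card s : ℝ≥0∞) + 1)⁻¹
        (ENNReal.inv_le_one.2 le_add_self)).bind
        fun b => if b then PMF.pure s else (eraseRandom s).map (x ::ₘ ·) := by
  rw [eraseRandom, dif_neg Multiset.cons_ne_zero, PMF.ofMultiset_cons x hs, PMF.map_bind,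
    eraseRandom, dif_neg hs, PMF.map_comp]
  congr 1
  funext b
  cases b
  · refine PMF.map_congr_support _ fun y hy => ?_
    exact Multiset.erase_cons_tail_of_mem (by simpa using hy)
  · simp [PMF.pure_map]

theorem iid_bind_eraseRandom (q : PMF X) (k : ℕ) : (iid q (k + 1)).bind eraseRandom = iid q k := by
  induction k with
  | zero => simp [iid, PMF.bind_map, Function.comp_def, eraseRandom_singleton]
  | succ k ih =>
    -- Condition on whether the newest draw `x` is the point that gets erased.
    set coin := PMF.bernoulliENNReal (((k + 1 : ℕ) : ℝ≥0∞) + 1)⁻¹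
      (ENNReal.inv_le_one.2 le_add_self)
    calc (iid q (k + 1 + 1)).bind eraseRandom
        = (iid q (k + 1)).bind fun s => q.bind fun x => eraseRandom (x ::ₘ s) := by
          rw [iid, PMF.bind_bind]
          simp only [PMF.bind_map, Function.comp_def]
      _ = (iid q (k + 1)).bind fun s => coin.bind fun b =>
            if b then PMF.pure s else (eraseRandom s).bind fun v => q.map (· ::ₘ v) := by
          refine PMF.bind_congr_support _ fun s hs => ?_
          have hcard := card_eq_of_mem_support_iid q hs
          have hs0 : s ≠ 0 := by rintro rfl; simp at hcard
          simp_rw [eraseRandom_cons _ hs0, hcard]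
          rw [PMF.bind_comm]
          congr 1
          funext b
          cases b
          · simp only [Bool.false_eq_true, ↓reduceIte, PMF.map]
            exact PMF.bind_comm _ _ _
          · simp
      _ = coin.bind fun b => if b then iid q (k + 1)
            else ((iid q (k + 1)).bind eraseRandom).bind fun v => q.map (· ::ₘ v) := by
          rw [PMF.bind_comm]
          congr 1
          funext b
          cases b <;> simp [PMF.bind_bind]
      _ = iid q (k + 1) := by
          rw [ih]
          simp [iid]

theorem iid_bind_eraseRandomN (q : PMF X) {m j : ℕ} (h : j ≤ m) :
    (iid q m).bind (eraseRandomN j) = iid q (m - j) := by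
  induction j with
  | zero => simp [eraseRandomN]
  | succ j ih =>
    have hm : m - j = m - (j + 1) + 1 := by omega
    simp only [eraseRandomN]
    rw [← PMF.bind_bind, ih (by omega), hm, iid_bind_eraseRandom]

end RandomErasure

section Thinning

variable {X : Type*} (w : X → ℝ≥0∞) (hw : ∀ x, w x ≤ 1)

def keepStep (x : X) (μ : PMF (Multiset X)) : PMF (Multiset X) :=
  μ.bind fun t => (PMF.bernoulliENNReal (w x) (hw x)).bind fun b =>
    PMF.pure (if b then x ::ₘ t else t)

instance : LeftCommutative (keepStep w hw) where
  left_comm x y μ := by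
    simp only [keepStep, PMF.bind_bind, PMF.pure_bind]
    congr 1
    funext t
    rw [PMF.bind_comm]
    congr 1
    funext b
    congr 1
    funext b'
    cases b <;> cases b' <;> simp [Multiset.cons_swap]

def thin (S : Multiset X) : PMF (Multiset X) :=
  S.foldr (keepStep w hw) (PMF.pure 0)

theorem le_of_mem_support_thin {S T : Multiset X} (h : T ∈ (thin w hw S).support) : T ≤ S := by
  induction S using Multiset.induction_on generalizing T with
  | empty => simp_all [thin]
  | cons x S ih =>
    simp only [thin, Multiset.foldr_cons, keepStep, PMF.mem_support_bind_iff,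
      PMF.support_pure, Set.mem_singleton_iff] at h
    obtain ⟨t, ht, b, -, rfl⟩ := h
    cases b
    · exact (ih ht).trans (Multiset.le_cons_self S x)
    · exact Multiset.cons_le_cons x (ih ht)

end Thinning

section BinomialCount

def binomialCount (e : ℝ≥0∞) (he : e ≤ 1) : ℕ → PMF ℕ
  | 0 => PMF.pure 0
  | n + 1 => (binomialCount e he n).bind fun k =>
      (PMF.bernoulliENNReal e he).bind fun b => PMF.pure (if b then k + 1 else k)

theorem tsum_binomialCount_succ_mul {e : ℝ≥0∞} (he : e ≤ 1) (n : ℕ) (g : ℕ → ℝ≥0∞) :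
    ∑' k, binomialCount e he (n + 1) k * g k =
      ∑' k, binomialCount e he n k * (e * g (k + 1) + (1 - e) * g k) := by
  rw [binomialCount, PMF.tsum_bind_mul]
  refine tsum_congr fun k => ?_
  simp_rw [PMF.bernoulliENNReal_bind_apply, add_mul, ENNReal.tsum_add, mul_assoc,
    ENNReal.tsum_mul_left]
  simp [PMF.pure_apply, ite_mul]

theorem tsum_binomialCount_mul_sq_sub {q : ℝ} (hq0 : 0 ≤ q) (hq1 : q ≤ 1) (m : ℕ) :
    ∑' k, binomialCount (ENNReal.ofReal q) (ENNReal.ofReal_le_one.2 hq1) m k *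
        ENNReal.ofReal ((k - q * m) ^ 2) = m * ENNReal.ofReal (q * (1 - q)) := by
  induction m with
  | zero => simp [binomialCount, PMF.pure_apply, ite_mul]
  | succ n ih =>
    have step : ∀ k : ℕ,
        ENNReal.ofReal q * ENNReal.ofReal (((k + 1 : ℕ) - q * (n + 1 : ℕ)) ^ 2) +
          (1 - ENNReal.ofReal q) * ENNReal.ofReal ((k - q * (n + 1 : ℕ)) ^ 2) =
        ENNReal.ofReal ((k - q * n) ^ 2) + ENNReal.ofReal (q * (1 - q)) := by
      intro k
      rw [← ENNReal.ofReal_one, ← ENNReal.ofReal_sub _ hq0, ← ENNReal.ofReal_mul hq0,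
        ← ENNReal.ofReal_mul (by linarith), ← ENNReal.ofReal_add (by positivity)
          (mul_nonneg (by linarith) (sq_nonneg _)),
        ← ENNReal.ofReal_add (sq_nonneg _) (mul_nonneg hq0 (by linarith))]
      congr 1
      push_cast
      ring
    rw [tsum_binomialCount_succ_mul]
    simp_rw [step, mul_add, ENNReal.tsum_add, ENNReal.tsum_mul_right, PMF.tsum_coe, ih]
    push_cast
    ring

theorem probEvent_binomialCount_le_sub {q : ℝ} (hq0 : 0 ≤ q) (hq1 : q ≤ 1) (m : ℕ) {a : ℝ}
    (ha : 0 < a) :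
    probEvent (binomialCount (ENNReal.ofReal q) (ENNReal.ofReal_le_one.2 hq1) m)
        {k | (k : ℝ) ≤ q * m - a} ≤ ENNReal.ofReal (m / (4 * a ^ 2)) := by
  calc _ ≤ ∑' k, binomialCount (ENNReal.ofReal q) (ENNReal.ofReal_le_one.2 hq1) m k *
          (ENNReal.ofReal ((k - q * m) ^ 2) * ENNReal.ofReal (a ^ 2)⁻¹) := by
        refine probEvent_le_tsum _ _ fun k => ?_
        by_cases hk : k ∈ {k : ℕ | (k : ℝ) ≤ q * m - a}
        · rw [Set.indicator_of_mem hk, Pi.one_apply, ← ENNReal.ofReal_mul (sq_nonneg _),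
            ENNReal.one_le_ofReal, le_mul_inv_iff₀ (by positivity), one_mul]
          nlinarith [hk.out]
        · simp [Set.indicator_of_notMem hk]
    _ = m * ENNReal.ofReal (q * (1 - q)) * ENNReal.ofReal (a ^ 2)⁻¹ := by
        simp_rw [← mul_assoc, ENNReal.tsum_mul_right, tsum_binomialCount_mul_sq_sub hq0 hq1]
    _ ≤ m * ENNReal.ofReal (1 / 4) * ENNReal.ofReal (a ^ 2)⁻¹ := by
        gcongr
        nlinarith [sq_nonneg (q - 1 / 2)]
    _ = ENNReal.ofReal (m / (4 * a ^ 2)) := by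
        rw [← ENNReal.ofReal_natCast, ← ENNReal.ofReal_mul (by positivity),
          ← ENNReal.ofReal_mul (by positivity)]
        congr 1
        field_simp

end BinomialCount

section ThinnedSample

variable {X : Type*}

def keepWeight (p p' : PMF X) (e : ℝ≥0∞) (x : X) : ℝ≥0∞ := e * p' x / p x

theorem keepWeight_le_one {p p' : PMF X} {e : ℝ≥0∞} (h : ∀ x, e * p' x ≤ p x) (x : X) :
    keepWeight p p' e x ≤ 1 :=
  ENNReal.div_le_of_le_mul (by simpa using h x)

theorem mul_keepWeight {p p' : PMF X} {e : ℝ≥0∞} (h : ∀ x, e * p' x ≤ p x) (x : X) :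
    p x * keepWeight p p' e x = e * p' x := by
  by_cases hx : p x = 0
  · have := h x
    simp_all
  · exact ENNReal.mul_div_cancel hx (p.apply_ne_top x)

variable {p p' : PMF X} {e : ℝ≥0∞} {w : X → ℝ≥0∞}

theorem bind_keepStep_pure (he : e ≤ 1) (hw : ∀ x, w x ≤ 1) (hpw : ∀ x, p x * w x = e * p' x)
    (t : Multiset X) :
    (p.bind fun x => keepStep w hw x (PMF.pure t)) =
      (PMF.bernoulliENNReal e he).bind fun b => if b then p'.map (· ::ₘ t) else PMF.pure t := by
  have hkept : ∑' x, p x * w x = e := by simp [hpw, ENNReal.tsum_mul_left]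
  have hdropped : ∑' x, p x * (1 - w x) = 1 - e := by
    refine ENNReal.eq_sub_of_add_eq (ne_top_of_le_ne_top ENNReal.one_ne_top he) ?_
    have hsplit : ∀ x, p x * (1 - w x) + p x * w x = p x := fun x => by
      rw [← mul_add, tsub_add_cancel_of_le (hw x), mul_one]
    rw [← hkept, ← ENNReal.tsum_add, tsum_congr hsplit, p.tsum_coe]
  ext u
  rw [PMF.bind_apply, PMF.bernoulliENNReal_bind_apply]
  simp only [keepStep, PMF.pure_bind, PMF.bernoulliENNReal_bind_apply, if_true,
    Bool.false_eq_true, if_false, mul_add, ENNReal.tsum_add, ← mul_assoc, hpw]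
  simp only [mul_assoc, ENNReal.tsum_mul_left, PMF.map_apply, PMF.pure_apply]
  congr 1
  · simp_rw [mul_ite, mul_one, mul_zero]
  · by_cases hu : u = t <;> simp [hu, hdropped]

theorem iid_bind_thin (he : e ≤ 1) (hw : ∀ x, w x ≤ 1) (hpw : ∀ x, p x * w x = e * p' x)
    (m : ℕ) : (iid p m).bind (thin w hw) = (binomialCount e he m).bind (iid p') := by
  induction m with
  | zero => simp [iid, thin, binomialCount]
  | succ m ih =>
    have hthin : ∀ s x,
        thin w hw (x ::ₘ s) = (thin w hw s).bind fun t => keepStep w hw x (PMF.pure t) := by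
      intro s x
      simp [thin, keepStep]
    have hgrow : ∀ k, ((iid p' k).bind fun t => (PMF.bernoulliENNReal e he).bind fun b =>
        if b then p'.map (· ::ₘ t) else PMF.pure t) =
        (PMF.bernoulliENNReal e he).bind fun b => iid p' (if b then k + 1 else k) := by
      intro k
      rw [PMF.bind_comm]
      congr 1
      funext b
      cases b
      · simp
      · rfl
    calc (iid p (m + 1)).bind (thin w hw)
        = (iid p m).bind fun s => p.bind fun x => thin w hw (x ::ₘ s) := by
          simp [iid, PMF.bind_bind, PMF.bind_map, Function.comp_def]
      _ = ((iid p m).bind (thin w hw)).bind fun t => (PMF.bernoulliENNReal e he).bind fun b =>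
            if b then p'.map (· ::ₘ t) else PMF.pure t := by
          simp_rw [hthin, PMF.bind_bind]
          congr 1
          funext s
          rw [PMF.bind_comm]
          simp_rw [bind_keepStep_pure he hw hpw]
      _ = (binomialCount e he (m + 1)).bind (iid p') := by
          simp [ih, PMF.bind_bind, hgrow, binomialCount]

end ThinnedSample

section Budget

/-- `GTFixedBudgetSub V η` forces `V` to return `k - ⌊η k⌋` points from a sample of size `k`. -/
def keptCount (η : ℝ) (k : ℕ) : ℕ := k - ⌊η * k⌋₊

theorem floor_mul_le_self {η : ℝ} (hη1 : η ≤ 1) (k : ℕ) : ⌊η * k⌋₊ ≤ k :=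
  Nat.floor_le_of_le (by nlinarith [(k.cast_nonneg : (0 : ℝ) ≤ k)])

theorem keptCount_le (η : ℝ) (k : ℕ) : keptCount η k ≤ k := Nat.sub_le _ _

theorem keptCount_budget {η : ℝ} (hη0 : 0 ≤ η) (hη1 : η ≤ 1) (k : ℕ) :
    η * k - 1 < (k : ℝ) - keptCount η k ∧ (k : ℝ) - keptCount η k ≤ η * k := by
  rw [keptCount, Nat.cast_sub (floor_mul_le_self hη1 k), sub_sub_cancel]
  exact ⟨by linarith [Nat.lt_floor_add_one (η * k)], Nat.floor_le (by positivity)⟩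

theorem Nat.exists_eq_of_map_zero_of_le_succ {f : ℕ → ℕ} (h0 : f 0 = 0)
    (hstep : ∀ k, f (k + 1) ≤ f k + 1) (hunbdd : ∀ n, ∃ k, n ≤ f k) (n : ℕ) : ∃ k, f k = n := by
  classical
  refine ⟨Nat.find (hunbdd n), le_antisymm ?_ (Nat.find_spec (hunbdd n))⟩
  rcases hk : Nat.find (hunbdd n) with _ | k
  · simp [h0]
  · have := Nat.find_min (hunbdd n) (show k < Nat.find (hunbdd n) by omega)
    have := hstep k
    omega

theorem exists_keptCount_eq {η : ℝ} (hη0 : 0 ≤ η) (hη1 : η < 1) (n : ℕ) :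
    ∃ k, keptCount η k = n := by
  refine Nat.exists_eq_of_map_zero_of_le_succ (by simp [keptCount]) (fun k => ?_) (fun n => ?_) n
  · have : ⌊η * k⌋₊ ≤ ⌊η * (k + 1 : ℕ)⌋₊ := Nat.floor_le_floor (by gcongr; simp)
    simp only [keptCount]
    omega
  · obtain ⟨k, hk⟩ := exists_nat_gt ((n : ℝ) / (1 - η))
    refine ⟨k, ?_⟩
    have hfloor : (⌊η * k⌋₊ : ℝ) ≤ η * k := Nat.floor_le (by positivity)
    rw [div_lt_iff₀ (by linarith)] at hk
    have : (n : ℝ) ≤ (keptCount η k : ℕ) := by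
      rw [keptCount, Nat.cast_sub (floor_mul_le_self hη1.le k)]
      nlinarith
    exact_mod_cast this

end Budget

theorem probEvent_binomialCount_lt_keptCount_le {η θ : ℝ} (hη0 : 0 ≤ η) (hθ : 0 < θ)
    (hηθ : η + θ ≤ 1) (he : ENNReal.ofReal (1 - η) ≤ 1) {m : ℕ} (hm : 0 < m) :
    probEvent (binomialCount _ he m) {k | k < keptCount (η + θ) m} ≤
      ENNReal.ofReal (1 / (4 * θ ^ 2 * m)) := by
  calc _ ≤ probEvent (binomialCount _ he m) {k | (k : ℝ) ≤ (1 - η) * m - θ * m} := by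
        refine probEvent_mono _ fun k (hk : k < keptCount (η + θ) m) => ?_
        have hk' : (k : ℝ) + 1 ≤ m - ⌊(η + θ) * m⌋₊ := by
          rw [← Nat.cast_sub (floor_mul_le_self hηθ m)]
          exact_mod_cast hk
        have hfloor := Nat.lt_floor_add_one ((η + θ) * m)
        show (k : ℝ) ≤ (1 - η) * m - θ * m
        linarith [show (η + θ) * m = η * m + θ * m by ring]
    _ ≤ ENNReal.ofReal (m / (4 * (θ * m) ^ 2)) :=
        probEvent_binomialCount_le_sub (by linarith) (by linarith) m (by positivity)
    _ = ENNReal.ofReal (1 / (4 * θ ^ 2 * m)) := by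
        congr 1
        field_simp

section Adversary

variable {X : Type*} [DecidableEq X] {w : X → ℝ≥0∞}

/-- If thinning kept fewer than `c |S|` points, any sub-multiset of `S` of that size will do:
this branch has small probability. -/
def trimmedThinning (hw : ∀ x, w x ≤ 1) (c : ℕ → ℕ) (S : Multiset X) : PMF (Multiset X) :=
  (thin w hw S).bind fun t =>
    if c (Multiset.card S) ≤ Multiset.card t then
      eraseRandomN (Multiset.card t - c (Multiset.card S)) t
    else eraseRandomN (Multiset.card S - c (Multiset.card S)) S

theorem le_and_card_of_mem_support_trimmedThinning (hw : ∀ x, w x ≤ 1) {c : ℕ → ℕ}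
    (hc : ∀ k, c k ≤ k) {S T : Multiset X} (h : T ∈ (trimmedThinning hw c S).support) :
    T ≤ S ∧ Multiset.card T = c (Multiset.card S) := by
  obtain ⟨t, ht, hT⟩ := (PMF.mem_support_bind_iff _ _ _).1 h
  have htS := le_of_mem_support_thin w hw ht
  split_ifs at hT with hct
  · obtain ⟨hTt, hcard⟩ := le_and_card_of_mem_support_eraseRandomN hT
    exact ⟨hTt.trans htS, by omega⟩
  · obtain ⟨hTS, hcard⟩ := le_and_card_of_mem_support_eraseRandomN hT
    exact ⟨hTS, by have := hc (Multiset.card S); omega⟩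

theorem probEvent_iid_bind_trimmedThinning_le (hw : ∀ x, w x ≤ 1) (c : ℕ → ℕ) {p p' : PMF X}
    {e : ℝ≥0∞} (he : e ≤ 1)
    (hpw : ∀ x, p x * w x = e * p' x) (m : ℕ) (E : Set (Multiset X)) :
    probEvent ((iid p m).bind (trimmedThinning hw c)) E ≤
      probEvent (iid p' (c m)) E + probEvent (binomialCount e he m) {k | k < c m} := by
  set n := c m
  set P := probEvent (iid p' n) E
  let g : Multiset X → ℝ≥0∞ := fun t =>
    if n ≤ Multiset.card t then probEvent (eraseRandomN (Multiset.card t - n) t) E else 1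
  have hthin : ∀ S ∈ (iid p m).support,
      probEvent (trimmedThinning hw c S) E ≤ ∑' t, thin w hw S t * g t := by
    intro S hS
    rw [trimmedThinning, probEvent_bind, card_eq_of_mem_support_iid p hS]
    refine ENNReal.tsum_le_tsum fun t => ?_
    gcongr
    simp only [g]
    split_ifs
    · exact le_rfl
    · exact probEvent_le_one _ _
  have hsample : ∀ k, ∑' t, iid p' k t * g t = if n ≤ k then P else 1 := by
    intro k
    have hg : ∀ t ∈ (iid p' k).support, g t =
        if n ≤ k then probEvent (eraseRandomN (k - n) t) E else 1 := by
      intro t ht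
      simp only [g, card_eq_of_mem_support_iid p' ht]
    rw [PMF.tsum_mul_congr_support _ hg]
    split_ifs with hk
    · rw [← probEvent_bind, iid_bind_eraseRandomN p' (Nat.sub_le k n), Nat.sub_sub_self hk]
    · simp
  calc probEvent ((iid p m).bind (trimmedThinning hw c)) E
      ≤ ∑' S, iid p m S * ∑' t, thin w hw S t * g t := by
        rw [probEvent_bind]
        refine ENNReal.tsum_le_tsum fun S => ?_
        by_cases hS : S ∈ (iid p m).support
        · gcongr
          exact hthin S hS
        · simp [(PMF.apply_eq_zero_iff _ _).2 hS]
    _ = ∑' k, binomialCount e he m k * (if n ≤ k then P else 1) := by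
        rw [← PMF.tsum_bind_mul, iid_bind_thin he hw hpw, PMF.tsum_bind_mul]
        simp_rw [hsample]
    _ ≤ ∑' k, binomialCount e he m k * (P + {k | k < n}.indicator 1 k) := by
        refine ENNReal.tsum_le_tsum fun k => ?_
        gcongr
        by_cases hk : n ≤ k
        · simp [hk]
        · simp [hk, Set.indicator_of_mem (show k ∈ {k | k < n} from Nat.lt_of_not_le hk)]
    _ = P + probEvent (binomialCount e he m) {k | k < n} := by
        simp_rw [probEvent_eq_tsum, mul_add, ENNReal.tsum_add, ENNReal.tsum_mul_right,
          PMF.tsum_coe, one_mul]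

theorem gtSubtractive_trimmedThinning (hw : ∀ x, w x ≤ 1) {c : ℕ → ℕ} (hc : ∀ k, c k ≤ k) :
    GTSubtractive fun S (_ : PMF X) => trimmedThinning hw c S :=
  fun _ _ _ hT => (le_and_card_of_mem_support_trimmedThinning hw hc hT).1

theorem gtFixedBudgetSub_trimmedThinning (hw : ∀ x, w x ≤ 1) {η : ℝ} (hη0 : 0 ≤ η) (hη1 : η ≤ 1) :
    GTFixedBudgetSub (fun S (_ : PMF X) => trimmedThinning hw (keptCount η) S) η :=
  ⟨keptCount η,
    fun _ _ _ hT => (le_and_card_of_mem_support_trimmedThinning hw (keptCount_le η) hT).2,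
    keptCount_budget hη0 hη1⟩

theorem probEvent_iid_bind_trimmedThinning_keepWeight_le {p p' : PMF X} {η θ : ℝ} (hη0 : 0 ≤ η)
    (hθ : 0 < θ) (hηθ : η + θ ≤ 1) (hdom : ∀ x, ENNReal.ofReal (1 - η) * p' x ≤ p x) {m : ℕ}
    (hm : 0 < m) (E : Set (Multiset X)) :
    probEvent ((iid p m).bind (trimmedThinning (keepWeight_le_one hdom) (keptCount (η + θ)))) E ≤
      probEvent (iid p' (keptCount (η + θ) m)) E + ENNReal.ofReal (1 / (4 * θ ^ 2 * m)) := by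
  have he : ENNReal.ofReal (1 - η) ≤ 1 := ENNReal.ofReal_le_one.2 (by linarith)
  refine (probEvent_iid_bind_trimmedThinning_le _ _ he (mul_keepWeight hdom) m E).trans ?_
  gcongr
  exact probEvent_binomialCount_lt_keptCount_le hη0 hθ hηθ he hm

end Adversary

theorem ObliviouslySubtractivelyRobustlyLearnable.of_gtAware {X : Type*} {C : Set (PMF X)}
    {α : ℝ} (hα : 1 ≤ α) (h : GTAwareSubtractivelyRobustlyLearnable C α) :
    ObliviouslySubtractivelyRobustlyLearnable C α := by
  classical
  obtain ⟨A, mc, hA⟩ := h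
  refine ⟨A, fun ε δ => max (mc (ε / 2) (δ / 2)) ⌈2 * α ^ 2 / (ε ^ 2 * δ)⌉₊, ?_⟩
  intro p hp η hη0 hη1 p' r hdec ε δ hε0 hε1 hδ0 hδ1 m hm
  rw [max_le_iff] at hm
  set θ := ε / (2 * α)
  have hθ : 0 < θ := by positivity
  have hαθ : α * θ = ε / 2 := by simp only [θ]; field_simp
  rcases le_or_gt 1 (η + θ) with hηθ | hηθ
  · have hbound : 1 ≤ α * η + ε := by nlinarith
    rw [probEvent_eq_one_of_forall_mem (E := {S | tv (A S) p ≤ α * η + ε}) _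
      fun S => (tv_le_one (A S) p).trans hbound]
    exact tsub_le_self
  have hdom : ∀ x, ENNReal.ofReal (1 - η) * p' x ≤ p x := fun x => hdec x ▸ le_self_add
  have hw := keepWeight_le_one hdom
  obtain ⟨m', hm'⟩ := exists_keptCount_eq (by positivity : 0 ≤ η + θ) hηθ m
  have hmm' : m ≤ m' := hm' ▸ keptCount_le (η + θ) m'
  have hm'big : 2 * α ^ 2 / (ε ^ 2 * δ) ≤ m' :=
    (Nat.le_ceil _).trans (by exact_mod_cast hm.2.trans hmm')
  have hm'pos : (0 : ℝ) < m' := lt_of_lt_of_le (by positivity) hm'big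
  have hlearn := hA _ (gtSubtractive_trimmedThinning hw (keptCount_le (η + θ))) (η + θ)
    (by positivity) hηθ (gtFixedBudgetSub_trimmedThinning hw (by positivity) hηθ.le) p hp
    (ε / 2) (δ / 2) (by positivity) (by linarith) (by positivity) (by linarith) m'
    (hm.1.trans hmm')
  rw [mul_add, hαθ, add_assoc, add_halves] at hlearn
  have hchebyshev : 1 / (4 * θ ^ 2 * m') ≤ δ / 2 := by
    rw [div_le_iff₀ (by positivity)] at hm'big
    rw [div_le_iff₀ (by positivity)]
    simp only [θ]
    field_simp
    nlinarith
  have htransfer := probEvent_iid_bind_trimmedThinning_keepWeight_le hη0 hθ hηθ.le hdom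
    (Nat.cast_pos.1 hm'pos) {T | tv (A T) p ≤ α * η + ε}
  rw [hm'] at htransfer
  rw [tsub_le_iff_right]
  calc 1 ≤ 1 - ENNReal.ofReal (δ / 2) + ENNReal.ofReal (δ / 2) := le_tsub_add
    _ ≤ probEvent (iid p' m) {S | tv (A S) p ≤ α * η + ε} + ENNReal.ofReal (δ / 2) +
          ENNReal.ofReal (δ / 2) := by
        gcongr
        exact hlearn.trans (htransfer.trans (by gcongr))
    _ = probEvent (iid p' m) {S | tv (A S) p ≤ α * η + ε} + ENNReal.ofReal δ := by
        rw [add_assoc, ← ENNReal.ofReal_add (by positivity) (by positivity), add_halves]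

end

theorem stmt16_general {X : Type*} (C : Set (PMF X)) (α : ℝ) (hα : 1 ≤ α)
    (h : ¬ ObliviouslySubtractivelyRobustlyLearnable C α) :
    ¬ GTAwareSubtractivelyRobustlyLearnable C α :=
  fun hGT => h (.of_gtAware hα hGT)

/-- If `C` is not obliviously subtractively α-robustly learnable, then `C`
is also not adaptively subtractively α-robustly learnable with respect to ground-truth-aware
subtractive adaptive adversaries. -/
theorem stmt16 {X : Type*} [Countable X] (C : Set (PMF X)) (α : ℝ) (hα : 1 ≤ α)
    (h : ¬ ObliviouslySubtractivelyRobustlyLearnable C α) :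
    ¬ GTAwareSubtractivelyRobustlyLearnable C α :=
  stmt16_general C α hα h
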